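/- For every n ≥ 1 and every ξ ∈ ℂ with |ξ − z₁| < ρ₁, one has (1/2)·(1/(2πi))·∮_{|ζ−z₁|=ρ₁} q₁,ₙ(ζ)/(ζ − ξ) dζ + (1/2)·conj( (1/(2πi))·∮_{|ζ−z₁|=ρ₁} conj(q₁,ₙ(ζ))/(ζ − ξ) dζ ) = (1/2)·κ₁,ₙ/(ξ − z₂,ₙ₋₁), where both circle integrals are taken counterclockwise. -/

import Mathlib

/-!
The density `q = κ / (ζ - w) + α` has its pole `w = z2s (n - 1)` outside the closed disk, so by
Cauchy's formula the first integral is `q ξ`. On the circle `conj (ζ - z₁) = ρ₁² / (ζ - z₁)`, so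
`conj q` agrees there with a rational function whose only pole is the inversion of `w` in the
circle, which lies inside the disk; its Cauchy integral is therefore its value at infinity,
`conj (q z₁)`. The choice of `α₁ n` makes `q z₁ = -α`, and the two halves add up to
`κ / (2 (ξ - w))`. That `w` lies outside the disk follows from the recursion keeping
`l₁ ≥ 1 - ρ₂ / ρ`.
-/

open Complex Metric ComplexConjugate EuclideanGeometry Real

section Circle

variable {c ξ w : ℂ} {R : ℝ}

lemma inversion_eq_add_div_conj (c w : ℂ) (R : ℝ) :
    inversion c R w = c + R ^ 2 / conj (w - c) := by
  rcases eq_or_ne w c with rfl | hwc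
  · simp [inversion]
  have hv : w - c ≠ 0 := sub_ne_zero.2 hwc
  have hn : (‖w - c‖ : ℂ) ≠ 0 := by exact_mod_cast norm_ne_zero_iff.2 hv
  have hconj : conj (w - c) = ‖w - c‖ ^ 2 / (w - c) := by
    rw [eq_div_iff hv, mul_comm, mul_conj']
  simp only [inversion, Complex.dist_eq, vsub_eq_sub, vadd_eq_add, Complex.real_smul]
  rw [hconj]
  push_cast
  field_simp
  ring

lemma inversion_mem_ball (hR : 0 < R) (hw : w ∉ closedBall c R) :
    inversion c R w ∈ ball c R := by
  have hwc : R < dist w c := lt_of_not_ge fun h => hw (mem_closedBall.2 h)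
  rw [mem_ball, dist_inversion_center, div_lt_iff₀ (hR.trans hwc), sq]
  exact mul_lt_mul_of_pos_left hwc hR

lemma conj_mul_self_eq_of_mem_sphere {ζ : ℂ} (hζ : ζ ∈ sphere c R) :
    conj (ζ - c) * (ζ - c) = R ^ 2 := by
  rw [mul_comm, mul_conj', ← Complex.dist_eq, mem_sphere.1 hζ]

lemma conj_inv_sub_eq_of_mem_sphere {ζ : ℂ} (hw : w ∉ closedBall c R)
    (hζ : ζ ∈ sphere c R) :
    conj (ζ - w)⁻¹ = conj (c - w)⁻¹ - R ^ 2 / conj (w - c) ^ 2 * (ζ - inversion c R w)⁻¹ := by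
  have hζw : conj (ζ - c) - conj (w - c) ≠ 0 := by
    rw [← map_sub, sub_sub_sub_cancel_right, map_ne_zero, sub_ne_zero]
    rintro rfl
    exact hw (sphere_subset_closedBall hζ)
  have hwc : conj (w - c) ≠ 0 := by
    rw [map_ne_zero, sub_ne_zero]
    rintro rfl
    exact hw (mem_closedBall_self (dist_nonneg.trans_eq (mem_sphere.1 hζ)))
  rcases eq_or_ne (ζ - c) 0 with hu | hu
  · have hR : R = 0 := by rw [← mem_sphere.1 hζ, Complex.dist_eq, hu, norm_zero]
    simp [sub_eq_zero.1 hu, hR]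
  rw [inversion_eq_add_div_conj, ← conj_mul_self_eq_of_mem_sphere hζ, map_inv₀, map_inv₀,
    show conj (ζ - w) = conj (ζ - c) - conj (w - c) by simp,
    show conj (c - w) = -conj (w - c) by simp,
    show ζ - (c + _) = (ζ - c) - conj (ζ - c) * (ζ - c) / conj (w - c) by ring]
  generalize conj (ζ - c) = U, conj (w - c) = V at *
  have hVU : V - U ≠ 0 := by rw [← neg_sub]; exact neg_ne_zero.2 hζw
  field_simp
  ring

lemma sub_ne_zero_of_mem_sphere_of_mem_ball {a ζ : ℂ} (ha : a ∈ ball c R) (hζ : ζ ∈ sphere c R) :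
    ζ - a ≠ 0 :=
  sub_ne_zero.2 (ne_of_mem_of_not_mem hζ (mem_ball.1 ha).ne)

lemma continuousOn_inv_sub_of_mem_ball {a : ℂ} (ha : a ∈ ball c R) :
    ContinuousOn (fun ζ => (ζ - a)⁻¹) (sphere c R) :=
  (continuousOn_id.sub continuousOn_const).inv₀
    fun _ hζ => sub_ne_zero_of_mem_sphere_of_mem_ball ha hζ

lemma circleIntegral_inv_sub_mul_inv_sub {a b : ℂ} (ha : a ∈ ball c R) (hb : b ∈ ball c R) :
    (∮ ζ in C(c, R), (ζ - a)⁻¹ * (ζ - b)⁻¹) = 0 := by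
  have hR : 0 < R := dist_nonneg.trans_lt ha
  rcases eq_or_ne a b with rfl | hab
  · have hsq : (fun ζ => (ζ - a)⁻¹ * (ζ - a)⁻¹) = fun ζ => (ζ - a) ^ (-2 : ℤ) := by
      funext ζ; rw [zpow_neg, zpow_two, mul_inv]
    rw [hsq, circleIntegral.integral_sub_zpow_of_ne (by decide)]
  · have hpf : ∀ ζ ∈ sphere c R,
        (ζ - a)⁻¹ * (ζ - b)⁻¹ = (a - b)⁻¹ * ((ζ - a)⁻¹ - (ζ - b)⁻¹) := fun ζ hζ => by
      have := sub_ne_zero_of_mem_sphere_of_mem_ball ha hζ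
      have := sub_ne_zero_of_mem_sphere_of_mem_ball hb hζ
      have := sub_ne_zero.2 hab
      field_simp
      ring
    rw [circleIntegral.integral_congr hR.le hpf, circleIntegral.integral_const_mul,
      circleIntegral.integral_sub ((continuousOn_inv_sub_of_mem_ball ha).circleIntegrable hR.le)
        ((continuousOn_inv_sub_of_mem_ball hb).circleIntegrable hR.le),
      circleIntegral.integral_sub_inv_of_mem_ball ha,
      circleIntegral.integral_sub_inv_of_mem_ball hb, sub_self, mul_zero]

lemma circleIntegral_const_add_pole_div_sub {ζ₀ : ℂ} (A B : ℂ) (hζ₀ : ζ₀ ∈ ball c R)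
    (hξ : ξ ∈ ball c R) :
    (∮ ζ in C(c, R), (A + B * (ζ - ζ₀)⁻¹) / (ζ - ξ)) = 2 * π * I * A := by
  have hR : 0 < R := dist_nonneg.trans_lt hξ
  have hsplit : (fun ζ => (A + B * (ζ - ζ₀)⁻¹) / (ζ - ξ))
      = fun ζ => A * (ζ - ξ)⁻¹ + B * ((ζ - ζ₀)⁻¹ * (ζ - ξ)⁻¹) := by
    funext ζ; ring
  rw [hsplit, circleIntegral.integral_add (f := fun ζ => A * (ζ - ξ)⁻¹)
      (g := fun ζ => B * ((ζ - ζ₀)⁻¹ * (ζ - ξ)⁻¹))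
      ((continuousOn_const.mul (continuousOn_inv_sub_of_mem_ball hξ)).circleIntegrable hR.le)
      ((continuousOn_const.mul ((continuousOn_inv_sub_of_mem_ball hζ₀).mul
        (continuousOn_inv_sub_of_mem_ball hξ))).circleIntegrable hR.le),
    circleIntegral.integral_const_mul, circleIntegral.integral_const_mul,
    circleIntegral.integral_sub_inv_of_mem_ball hξ, circleIntegral_inv_sub_mul_inv_sub hζ₀ hξ]
  ring

lemma circleIntegral_pole_add_const_div_sub (κ α : ℂ) (hw : w ∉ closedBall c R)
    (hξ : ξ ∈ ball c R) :
    (∮ ζ in C(c, R), (κ / (ζ - w) + α) / (ζ - ξ)) = 2 * π * I * (κ / (ξ - w) + α) := by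
  have hd : DifferentiableOn ℂ (fun ζ => κ / (ζ - w) + α) (closedBall c R) :=
    ((differentiableOn_const κ).div (differentiableOn_id.sub (differentiableOn_const w))
      fun ζ hζ => sub_ne_zero.2 (ne_of_mem_of_not_mem hζ hw)).add (differentiableOn_const α)
  simpa only [smul_eq_mul, div_eq_inv_mul] using hd.circleIntegral_sub_inv_smul hξ

lemma circleIntegral_conj_pole_add_const_div_sub (κ α : ℂ) (hw : w ∉ closedBall c R)
    (hξ : ξ ∈ ball c R) :
    (∮ ζ in C(c, R), conj (κ / (ζ - w) + α) / (ζ - ξ)) = 2 * π * I * conj (κ / (c - w) + α) := by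
  have hR : 0 < R := dist_nonneg.trans_lt hξ
  have hrat : Set.EqOn (fun ζ => conj (κ / (ζ - w) + α) / (ζ - ξ))
      (fun ζ => (conj (κ / (c - w) + α) + -(conj κ * R ^ 2 / conj (w - c) ^ 2) *
        (ζ - inversion c R w)⁻¹) / (ζ - ξ)) (sphere c R) := fun ζ hζ => by
    simp only [div_eq_mul_inv, map_add, map_mul, conj_inv_sub_eq_of_mem_sphere hw hζ]
    ring
  rw [circleIntegral.integral_congr hR.le hrat,
    circleIntegral_const_add_pole_div_sub _ _ (inversion_mem_ball hR hw) hξ]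

end Circle

lemma sq_div_le_self {b l : ℝ} (hb : 0 ≤ b) (hbl : b ≤ l) : b ^ 2 / l ≤ b :=
  div_le_of_le_mul₀ (hb.trans hbl) hb (by rw [sq]; exact mul_le_mul_of_nonneg_left hbl hb)

lemma le_of_coupled_recursion {a b : ℝ} (ha : 0 ≤ a) (hb : 0 ≤ b) (hab : a + b ≤ 1)
    {l₁ l₂ : ℕ → ℝ} (hl₁0 : l₁ 0 = 1) (hl₂0 : l₂ 0 = 1)
    (hl₁ : ∀ n, l₁ (n + 1) = 1 - b ^ 2 / l₂ n) (hl₂ : ∀ n, l₂ (n + 1) = 1 - a ^ 2 / l₁ n) :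
    ∀ n, 1 - b ≤ l₁ n ∧ 1 - a ≤ l₂ n := by
  intro n
  induction n with
  | zero => exact ⟨by linarith, by linarith⟩
  | succ n ih =>
    rw [hl₁, hl₂]
    exact ⟨by linarith [sq_div_le_self hb (by linarith [ih.2] : b ≤ l₂ n)],
      by linarith [sq_div_le_self ha (by linarith [ih.1] : a ≤ l₁ n)]⟩

lemma lt_mul_of_coupled_recursion {ρ ρ₁ ρ₂ : ℝ} (hρ₁ : 0 < ρ₁) (hρ₂ : 0 < ρ₂)
    (hsum : ρ₁ + ρ₂ < ρ) {l₁ l₂ : ℕ → ℝ} (hl₁0 : l₁ 0 = 1) (hl₂0 : l₂ 0 = 1)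
    (hl₁ : ∀ n, l₁ (n + 1) = 1 - (ρ₂ / ρ) ^ 2 / l₂ n)
    (hl₂ : ∀ n, l₂ (n + 1) = 1 - (ρ₁ / ρ) ^ 2 / l₁ n) (n : ℕ) :
    ρ₁ < l₁ n * ρ := by
  have hρ : 0 < ρ := by linarith
  have hl := (le_of_coupled_recursion (div_pos hρ₁ hρ).le (div_pos hρ₂ hρ).le
    (by rw [← add_div, div_le_one hρ]; linarith) hl₁0 hl₂0 hl₁ hl₂ n).1
  have := mul_le_mul_of_nonneg_right hl hρ.le
  rw [sub_mul, div_mul_cancel₀ _ hρ.ne', one_mul] at this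
  linarith

theorem double_layer_cauchy_identity_general
    (z₁ z₂ : ℂ) (ρ ρ₁ ρ₂ : ℝ)
    (hρ : ρ = ‖z₁ - z₂‖)
    (hρ₁ : 0 < ρ₁) (hρ₂ : 0 < ρ₂) (hsum : ρ₁ + ρ₂ < ρ)
    (Λ₁ Λ₂ : ℝ) (hΛ₁ : Λ₁ = (ρ₁ / ρ) ^ 2) (hΛ₂ : Λ₂ = (ρ₂ / ρ) ^ 2)
    (l₁ l₂ : ℕ → ℝ) (hl₁0 : l₁ 0 = 1) (hl₂0 : l₂ 0 = 1)
    (hl₁ : ∀ n : ℕ, l₁ (n + 1) = 1 - Λ₂ / l₂ n)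
    (hl₂ : ∀ n : ℕ, l₂ (n + 1) = 1 - Λ₁ / l₁ n)
    (κ₁ : ℕ → ℂ)
    (z2s : ℕ → ℂ)
    (hz2s : ∀ n : ℕ, z2s n = ((1 - l₁ n : ℝ) : ℂ) * z₁ + ((l₁ n : ℝ) : ℂ) * z₂)
    (α₁ : ℕ → ℂ)
    (hα₁ : ∀ n : ℕ, 1 ≤ n →
      α₁ n = -κ₁ n / (2 * ((l₁ (n - 1) : ℝ) : ℂ) * (z₁ - z₂)))
    (q₁ : ℕ → ℂ → ℂ)
    (hq₁ : ∀ n : ℕ, 1 ≤ n → ∀ z : ℂ, q₁ n z = κ₁ n / (z - z2s (n - 1)) + α₁ n)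
    :
    ∀ n : ℕ, 1 ≤ n → ∀ ξ : ℂ, ‖ξ - z₁‖ < ρ₁ →
      (1 / 2) * ((1 / (2 * (Real.pi : ℂ) * Complex.I)) *
          ∮ ζ in C(z₁, ρ₁), q₁ n ζ / (ζ - ξ)) +
      (1 / 2) * starRingEnd ℂ ((1 / (2 * (Real.pi : ℂ) * Complex.I)) *
          ∮ ζ in C(z₁, ρ₁), starRingEnd ℂ (q₁ n ζ) / (ζ - ξ)) =
      (1 / 2) * (κ₁ n / (ξ - z2s (n - 1))) := by
  intro n hn ξ hξ
  have hρpos : 0 < ρ := by linarith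
  have hα := hα₁ n hn
  have hq := hq₁ n hn
  set L := l₁ (n - 1)
  set w := z2s (n - 1)
  have hLρ : ρ₁ < L * ρ :=
    lt_mul_of_coupled_recursion hρ₁ hρ₂ hsum hl₁0 hl₂0 (hΛ₂ ▸ hl₁) (hΛ₁ ▸ hl₂) (n - 1)
  have hwz : z₁ - w = L * (z₁ - z₂) := by simp only [w, L, hz2s]; push_cast; ring
  have hw : w ∉ closedBall z₁ ρ₁ := by
    rw [mem_closedBall, Complex.dist_eq, ← norm_neg, neg_sub, hwz, norm_mul, ← hρ,
      Complex.norm_real, not_le]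
    exact hLρ.trans_le (mul_le_mul_of_nonneg_right (le_abs_self L) hρpos.le)
  have hξ' : ξ ∈ ball z₁ ρ₁ := by rwa [mem_ball, Complex.dist_eq]
  -- `q₁ n z₁ = -α₁ n`
  have hκα : κ₁ n / (z₁ - w) = -2 * α₁ n := by
    have hL : (L : ℂ) ≠ 0 := ofReal_ne_zero.2 (pos_of_mul_pos_left (hρ₁.trans hLρ) hρpos.le).ne'
    have hz : z₁ - z₂ ≠ 0 := norm_pos_iff.1 (hρ ▸ hρpos)
    rw [hwz, hα]
    field_simp
  simp_rw [hq, circleIntegral_pole_add_const_div_sub _ _ hw hξ',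
    circleIntegral_conj_pole_add_const_div_sub _ _ hw hξ', hκα]
  have hπI : 2 * (π : ℂ) * I ≠ 0 := by simp [pi_ne_zero, I_ne_zero]
  simp only [one_div, inv_mul_cancel_left₀ hπI, conj_conj]
  ring

theorem double_layer_cauchy_identity
    (z₁ z₂ : ℂ) (hz : z₁ ≠ z₂) (ρ ρ₁ ρ₂ : ℝ)
    (hρ : ρ = ‖z₁ - z₂‖)
    (hρ₁ : 0 < ρ₁) (hρ₂ : 0 < ρ₂) (hsum : ρ₁ + ρ₂ < ρ)
    (Λ₁ Λ₂ Λ : ℝ) (hΛ₁ : Λ₁ = (ρ₁ / ρ) ^ 2) (hΛ₂ : Λ₂ = (ρ₂ / ρ) ^ 2)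
    (hΛ : Λ = (Λ₁ - Λ₂) ^ 2 + 1 - 2 * (Λ₁ + Λ₂))
    (l₁ l₂ : ℕ → ℝ) (hl₁0 : l₁ 0 = 1) (hl₂0 : l₂ 0 = 1)
    (hl₁ : ∀ n : ℕ, l₁ (n + 1) = 1 - Λ₂ / l₂ n)
    (hl₂ : ∀ n : ℕ, l₂ (n + 1) = 1 - Λ₁ / l₁ n)
    (κ₁ κ₂ : ℕ → ℂ)
    (hκ₁1 : κ₁ 1 = ((2 * ρ₂ ^ 2 : ℝ) : ℂ))
    (hκ₁2 : κ₁ 2 = -(2 * (((ρ₁ * ρ₂ : ℝ)) : ℂ) ^ 2) / (starRingEnd ℂ (z₂ - z₁)) ^ 2)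
    (hκ₁rec : ∀ n : ℕ, 1 ≤ n →
      κ₁ (n + 2) = ((Λ₁ * Λ₂ / (l₂ n * l₁ (n - 1)) ^ 2 : ℝ) : ℂ) * κ₁ n)
    (hκ₂1 : κ₂ 1 = ((2 * ρ₁ ^ 2 : ℝ) : ℂ))
    (hκ₂2 : κ₂ 2 = -(2 * (((ρ₁ * ρ₂ : ℝ)) : ℂ) ^ 2) / (starRingEnd ℂ (z₁ - z₂)) ^ 2)
    (hκ₂rec : ∀ n : ℕ, 1 ≤ n →
      κ₂ (n + 2) = ((Λ₁ * Λ₂ / (l₁ n * l₂ (n - 1)) ^ 2 : ℝ) : ℂ) * κ₂ n)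
    (z1s z2s : ℕ → ℂ)
    (hz1s : ∀ n : ℕ, z1s n = ((1 - l₂ n : ℝ) : ℂ) * z₂ + ((l₂ n : ℝ) : ℂ) * z₁)
    (hz2s : ∀ n : ℕ, z2s n = ((1 - l₁ n : ℝ) : ℂ) * z₁ + ((l₁ n : ℝ) : ℂ) * z₂)
    (α₁ : ℕ → ℂ)
    (hα₁ : ∀ n : ℕ, 1 ≤ n →
      α₁ n = -κ₁ n / (2 * ((l₁ (n - 1) : ℝ) : ℂ) * (z₁ - z₂)))
    (q₁ : ℕ → ℂ → ℂ)
    (hq₁0 : ∀ z : ℂ, q₁ 0 z = 2 * (z - z₁))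
    (hq₁ : ∀ n : ℕ, 1 ≤ n → ∀ z : ℂ, q₁ n z = κ₁ n / (z - z2s (n - 1)) + α₁ n)
    :
    ∀ n : ℕ, 1 ≤ n → ∀ ξ : ℂ, ‖ξ - z₁‖ < ρ₁ →
      (1 / 2) * ((1 / (2 * (Real.pi : ℂ) * Complex.I)) *
          ∮ ζ in C(z₁, ρ₁), q₁ n ζ / (ζ - ξ)) +
      (1 / 2) * starRingEnd ℂ ((1 / (2 * (Real.pi : ℂ) * Complex.I)) *
          ∮ ζ in C(z₁, ρ₁), starRingEnd ℂ (q₁ n ζ) / (ζ - ξ)) =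
      (1 / 2) * (κ₁ n / (ξ - z2s (n - 1))) :=
  double_layer_cauchy_identity_general z₁ z₂ ρ ρ₁ ρ₂ hρ hρ₁ hρ₂ hsum Λ₁ Λ₂ hΛ₁ hΛ₂ l₁ l₂ hl₁0 hl₂0
    hl₁ hl₂ κ₁ z2s hz2s α₁ hα₁ q₁ hq₁
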